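/- Composition corresponds to twisted convolution of spreading functions: for all linear operators A, B on ℂ^N and all (m,n) ∈ ZMod N × ZMod N, η_{A∘B}(m,n) = ∑_{(l,s) ∈ ZMod N × ZMod N} η_A(m−l, n−s) · η_B(l,s) · e^{−2πi·(m−l)s/N}, where (m−l)s/N is computed from integer representatives (well defined). -/
import Mathlib

open Complex Finset Matrix

/-- The matrix of the time-frequency shift `π(k,r)` on `ℂ^N ≅ (ZMod N → ℂ)`, acting by
`(π(k,r)f)(j) = e^{2πi·rj/N} · f(j−k)`; its entries are `π(k,r)_{j,l} = ⟨π(k,r)e_l, e_j⟩`. -/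
noncomputable def tfMatrix (N : ℕ) (k r : ZMod N) : Matrix (ZMod N) (ZMod N) ℂ :=
  Matrix.of fun j l =>
    if j = l + k then Complex.exp (2 * Real.pi * Complex.I * (((r * j).val : ℂ) / (N : ℂ)))
    else 0

/-- The spreading function `η_A(k,r) = N⁻¹ · tr(A ∘ π(k,r)*)` of a linear operator `A`
on `ℂ^N` (as a matrix; `π(k,r)* = π(k,r)ᴴ` is the adjoint). -/
noncomputable def spreading {N : ℕ} [NeZero N] (A : Matrix (ZMod N) (ZMod N) ℂ)
    (k r : ZMod N) : ℂ :=
  (N : ℂ)⁻¹ * Matrix.trace (A * (tfMatrix N k r)ᴴ)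

/-- The standard additive character of `ZMod N`. -/
noncomputable def ch (N : ℕ) (x : ZMod N) : ℂ :=
  Complex.exp (2 * Real.pi * Complex.I * ((x.val : ℂ) / (N : ℂ)))

lemma ch_add (N : ℕ) [NeZero N] (x y : ZMod N) : ch N (x + y) = ch N x * ch N y := by
  unfold ch
  have hN : (N : ℂ) ≠ 0 := Nat.cast_ne_zero.mpr (NeZero.ne N)
  have hNinv : (N : ℂ) * (N : ℂ)⁻¹ = 1 := mul_inv_cancel₀ hN
  have h : x.val + y.val = (x + y).val + N * ((x.val + y.val) / N) := by
    rw [ZMod.val_add]; exact (Nat.mod_add_div _ _).symm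
  have hc : ((x.val : ℂ) + y.val) = ((x+y).val : ℂ) + N * (((x.val + y.val)/N : ℕ) : ℂ) :=
    mod_cast congrArg (Nat.cast : ℕ → ℂ) h
  have key : 2 * Real.pi * Complex.I * ((x.val : ℂ) / N) + 2 * Real.pi * Complex.I * ((y.val : ℂ) / N)
      = 2 * Real.pi * Complex.I * (((x+y).val : ℂ) / N)
        + (((x.val + y.val)/N : ℕ) : ℂ) * (2 * Real.pi * Complex.I) := by
    linear_combination (2 * (Real.pi:ℂ) * Complex.I * (N:ℂ)⁻¹) * hc
      + (2 * (Real.pi:ℂ) * Complex.I * (((x.val + y.val)/N : ℕ) : ℂ)) * hNinv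
  rw [← Complex.exp_add, key, Complex.exp_add]
  rw [show Complex.exp ((((x.val + y.val)/N : ℕ) : ℂ) * (2 * Real.pi * Complex.I)) = 1 from
    mod_cast Complex.exp_int_mul_two_pi_mul_I ((x.val + y.val)/N : ℕ), mul_one]

lemma ch_zero (N : ℕ) [NeZero N] : ch N 0 = 1 := by
  unfold ch; simp

lemma ch_neg (N : ℕ) [NeZero N] (x : ZMod N) : ch N (-x) = (ch N x)⁻¹ := by
  have h := ch_add N x (-x)
  rw [add_neg_cancel, ch_zero] at h
  exact eq_inv_of_mul_eq_one_left (by rw [mul_comm]; exact h.symm)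

lemma ch_star (N : ℕ) [NeZero N] (x : ZMod N) : star (ch N x) = ch N (-x) := by
  rw [ch_neg, Complex.star_def]
  unfold ch
  rw [← Complex.exp_conj, ← Complex.exp_neg]
  congr 1
  simp only [_root_.map_mul, map_div₀, Complex.conj_I, Complex.conj_ofReal, Complex.conj_ofNat,
    Complex.conj_natCast]
  ring

lemma ch_ne_one (N : ℕ) [NeZero N] {t : ZMod N} (ht : t ≠ 0) : ch N t ≠ 1 := by
  unfold ch
  intro h
  rw [Complex.exp_eq_one_iff] at h
  obtain ⟨n, hn⟩ := h
  have h2 : (2 : ℂ) * Real.pi * Complex.I ≠ 0 := by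
    simp [Real.pi_ne_zero, Complex.I_ne_zero]
  have hN : (N : ℂ) ≠ 0 := Nat.cast_ne_zero.mpr (NeZero.ne N)
  have h3 : ((t.val : ℂ)) / N = n := mul_left_cancel₀ h2 (hn.trans (mul_comm _ _))
  have hv : ((t.val : ℂ)) = n * N := by
    rw [div_eq_iff hN] at h3; exact h3
  have hvr : (t.val : ℤ) = n * N := by exact_mod_cast hv
  have hlt : (t.val : ℤ) < N := by exact_mod_cast ZMod.val_lt t
  have hNpos : (0 : ℤ) < N := by exact_mod_cast Nat.pos_of_ne_zero (NeZero.ne N)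
  have hge : (0 : ℤ) ≤ t.val := Int.ofNat_nonneg _
  have hn0 : n = 0 := by nlinarith
  have : t.val = 0 := by rw [hn0] at hvr; omega
  exact ht (by rwa [← ZMod.val_eq_zero])

lemma ch_sum (N : ℕ) [NeZero N] (t : ZMod N) :
    ∑ s : ZMod N, ch N (s * t) = if t = 0 then (N : ℂ) else 0 := by
  by_cases ht : t = 0
  · simp [ht, ch_zero, ZMod.card]
  · simp only [ht, if_false]
    set S := ∑ s : ZMod N, ch N (s * t) with hS
    have hshift : S = S * ch N t := by
      calc S = ∑ s : ZMod N, ch N ((s + 1) * t) :=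
              Fintype.sum_equiv (Equiv.subRight (1 : ZMod N)) _ _ (fun s => by simp)
        _ = ∑ s : ZMod N, ch N (s * t) * ch N t := by
              refine Finset.sum_congr rfl fun s _ => ?_
              rw [add_mul, one_mul, ch_add]
        _ = S * ch N t := by rw [← Finset.sum_mul]
    have h0 : S * (ch N t - 1) = 0 := by ring_nf; linear_combination -hshift
    rcases mul_eq_zero.mp h0 with h | h
    · exact h
    · exact absurd (by linear_combination h) (ch_ne_one N ht)

lemma spreading_eq {N : ℕ} [NeZero N] (A : Matrix (ZMod N) (ZMod N) ℂ) (k r : ZMod N) :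
    spreading A k r = (N : ℂ)⁻¹ * ∑ j : ZMod N, A j (j - k) * ch N (-(r * j)) := by
  unfold spreading
  congr 1
  rw [Matrix.trace]
  simp only [Matrix.diag_apply, Matrix.mul_apply, Matrix.conjTranspose_apply]
  refine Finset.sum_congr rfl fun i _ => ?_
  rw [Finset.sum_eq_single (i - k)]
  · show A i (i - k) * star (tfMatrix N k r i (i - k)) = _
    unfold tfMatrix
    rw [Matrix.of_apply, if_pos (by rw [sub_add_cancel])]
    rw [show Complex.exp (2 * Real.pi * Complex.I * (((r * i).val : ℂ) / (N : ℂ)))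
        = ch N (r * i) from rfl]
    rw [ch_star]
  · intro l _ hl
    show A i l * star (tfMatrix N k r i l) = 0
    unfold tfMatrix
    rw [Matrix.of_apply, if_neg, star_zero, mul_zero]
    intro h
    exact hl (by rw [h]; ring)
  · intro h; exact absurd (Finset.mem_univ _) h

/-- **Composition corresponds to twisted convolution of spreading functions**: for all
linear operators `A, B` on `ℂ^N` and all `(m,n)`,
`η_{A∘B}(m,n) = ∑_{(l,s)} η_A(m−l,n−s) · η_B(l,s) · e^{−2πi·(m−l)s/N}`. -/
theorem spreading_comp_twisted_convolution (N : ℕ) [NeZero N]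
    (A B : Matrix (ZMod N) (ZMod N) ℂ) (m n : ZMod N) :
    spreading (A * B) m n
      = ∑ p : ZMod N × ZMod N,
          spreading A (m - p.1) (n - p.2) * spreading B p.1 p.2 *
            Complex.exp (-(2 * Real.pi * Complex.I) * ((((m - p.1) * p.2).val : ℂ) / (N : ℂ))) := by
  have hN : (N : ℂ) ≠ 0 := Nat.cast_ne_zero.mpr (NeZero.ne N)
  have hexp : ∀ l s : ZMod N,
      Complex.exp (-(2 * Real.pi * Complex.I) * ((((m - l) * s).val : ℂ) / (N : ℂ)))
        = ch N (-((m - l) * s)) := by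
    intro l s
    rw [ch_neg]
    unfold ch
    rw [← Complex.exp_neg]
    ring_nf
  set F : ZMod N → ZMod N → ZMod N → ℂ :=
    fun l j i => A j (j - (m - l)) * B i (i - l) * ch N (-(n * j)) with hF
  have step1 : ∀ l s : ZMod N,
      spreading A (m - l) (n - s) * spreading B l s * ch N (-((m - l) * s))
        = (N : ℂ)⁻¹ * (N : ℂ)⁻¹ *
            ∑ j : ZMod N, ∑ i : ZMod N, F l j i * ch N (s * (j - i - (m - l))) := by
    intro l s
    rw [spreading_eq, spreading_eq]
    rw [show ((N:ℂ)⁻¹ * ∑ j : ZMod N, A j (j - (m-l)) * ch N (-((n-s) * j)))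
          * ((N:ℂ)⁻¹ * ∑ i : ZMod N, B i (i - l) * ch N (-(s * i))) * ch N (-((m-l)*s))
        = (N:ℂ)⁻¹ * (N:ℂ)⁻¹ *
          (((∑ j : ZMod N, A j (j - (m-l)) * ch N (-((n-s) * j)))
            * (∑ i : ZMod N, B i (i - l) * ch N (-(s * i)))) * ch N (-((m-l)*s))) from by ring]
    congr 1
    rw [Finset.sum_mul_sum, Finset.sum_mul]
    refine Finset.sum_congr rfl fun j _ => ?_
    rw [Finset.sum_mul]
    refine Finset.sum_congr rfl fun i _ => ?_
    have hch : ch N (-((n-s) * j)) * ch N (-(s * i)) * ch N (-((m-l)*s))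
        = ch N (-(n * j)) * ch N (s * (j - i - (m - l))) := by
      rw [← ch_add, ← ch_add, ← ch_add]
      congr 1
      ring
    simp only [hF]
    linear_combination (A j (j - (m-l)) * B i (i - l)) * hch
  have final : ∑ p : ZMod N × ZMod N,
          spreading A (m - p.1) (n - p.2) * spreading B p.1 p.2 *
            Complex.exp (-(2 * Real.pi * Complex.I) * ((((m - p.1) * p.2).val : ℂ) / (N : ℂ)))
      = (N : ℂ)⁻¹ * ∑ l : ZMod N, ∑ j : ZMod N, F l j (j - (m - l)) := by
    calc ∑ p : ZMod N × ZMod N,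
            spreading A (m - p.1) (n - p.2) * spreading B p.1 p.2 *
              Complex.exp (-(2 * Real.pi * Complex.I) * ((((m - p.1) * p.2).val : ℂ) / (N : ℂ)))
        = ∑ l : ZMod N, ∑ s : ZMod N, (N : ℂ)⁻¹ * (N : ℂ)⁻¹ *
            ∑ j : ZMod N, ∑ i : ZMod N, F l j i * ch N (s * (j - i - (m - l))) := by
          rw [Fintype.sum_prod_type]
          exact Finset.sum_congr rfl fun l _ => Finset.sum_congr rfl fun s _ => by
            rw [hexp l s, step1 l s]
      _ = (N : ℂ)⁻¹ * (N : ℂ)⁻¹ * ∑ l : ZMod N, ∑ s : ZMod N,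
            ∑ j : ZMod N, ∑ i : ZMod N, F l j i * ch N (s * (j - i - (m - l))) := by
          rw [Finset.mul_sum]
          exact Finset.sum_congr rfl fun l _ => by rw [Finset.mul_sum]
      _ = (N : ℂ)⁻¹ * (N : ℂ)⁻¹ * ∑ l : ZMod N, ∑ j : ZMod N,
            ∑ i : ZMod N, F l j i * ∑ s : ZMod N, ch N (s * (j - i - (m - l))) := by
          congr 1
          refine Finset.sum_congr rfl fun l _ => ?_
          rw [Finset.sum_comm]
          refine Finset.sum_congr rfl fun j _ => ?_
          rw [Finset.sum_comm]
          exact Finset.sum_congr rfl fun i _ => by rw [Finset.mul_sum]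
      _ = (N : ℂ)⁻¹ * (N : ℂ)⁻¹ * ∑ l : ZMod N, ∑ j : ZMod N,
            ∑ i : ZMod N, (if i = j - (m - l) then F l j i * (N : ℂ) else 0) := by
          congr 1
          refine Finset.sum_congr rfl fun l _ => Finset.sum_congr rfl fun j _ =>
            Finset.sum_congr rfl fun i _ => ?_
          rw [ch_sum, mul_ite, mul_zero]
          have hcond : j - i - (m - l) = 0 ↔ i = j - (m - l) := by
            rw [sub_right_comm, sub_eq_zero]; exact eq_comm
          simp only [hcond]
      _ = (N : ℂ)⁻¹ * (N : ℂ)⁻¹ * ∑ l : ZMod N, ∑ j : ZMod N,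
            F l j (j - (m - l)) * (N : ℂ) := by
          congr 1
          refine Finset.sum_congr rfl fun l _ => Finset.sum_congr rfl fun j _ => ?_
          rw [Finset.sum_ite_eq' Finset.univ (j - (m - l)) (fun i => F l j i * (N : ℂ))]
          simp
      _ = (N : ℂ)⁻¹ * ∑ l : ZMod N, ∑ j : ZMod N, F l j (j - (m - l)) := by
          rw [show ∑ l : ZMod N, ∑ j : ZMod N, F l j (j - (m - l)) * (N : ℂ)
              = (∑ l : ZMod N, ∑ j : ZMod N, F l j (j - (m - l))) * (N : ℂ) from by
            rw [Finset.sum_mul]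
            exact Finset.sum_congr rfl fun l _ => by rw [Finset.sum_mul]]
          field_simp
  rw [final, spreading_eq]
  congr 1
  calc ∑ j : ZMod N, (A * B) j (j - m) * ch N (-(n * j))
      = ∑ j : ZMod N, ∑ u : ZMod N, A j u * B u (j - m) * ch N (-(n * j)) := by
        refine Finset.sum_congr rfl fun j _ => ?_
        rw [Matrix.mul_apply, Finset.sum_mul]
    _ = ∑ l : ZMod N, ∑ j : ZMod N, F l j (j - (m - l)) := by
        conv_rhs => rw [Finset.sum_comm]
        refine Finset.sum_congr rfl fun j _ => ?_
        refine Fintype.sum_equiv (Equiv.subRight (j - m)) _ _ fun u => ?_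
        simp only [hF, Equiv.subRight_apply]
        have h1 : j - (m - (u - (j - m))) = u := by ring
        rw [h1]
        have h2 : u - (u - (j - m)) = j - m := by ring
        rw [h2]
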